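/- Let (Γ,φ) be an incidence gain graph whose underlying incidence structure (P,B,I) is a linear space with finite point set P, with gain group acting on a nonempty set Λ, and suppose 𝔐(Γ,φ) is a generalized quadrangle. Then Λ is finite, |P| = v ≥ 3, |Λ| = k ≥ 2, every line of 𝔐(Γ,φ) is incident with exactly 1 + (v-1)/(k-1) points, and every point of 𝔐(Γ,φ) is incident with exactly k lines. -/

import Mathlib

open Classical

/-- An incidence structure: points `P`, lines `B`, incidence relation `inc`. -/
structure IncStruct (P B : Type*) where
  inc : P → B → Prop

namespace IncStruct

variable {P B : Type*}

/-- Adjacency in the incidence graph on `P ⊕ B`. -/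
def adj (S : IncStruct P B) : P ⊕ B → P ⊕ B → Prop
  | Sum.inl p, Sum.inr b => S.inc p b
  | Sum.inr b, Sum.inl p => S.inc p b
  | _, _ => False

/-- `c` is a `k`-chain from `u` to `v`: a list of `k+1` elements, starting at `u`,
ending at `v`, with consecutive elements incident. -/
def IsNChain (S : IncStruct P B) (k : ℕ) (u v : P ⊕ B) (c : List (P ⊕ B)) : Prop :=
  c.length = k + 1 ∧ c.head? = some u ∧ c.getLast? = some v ∧ c.Chain' S.adj

/-- Distance between two elements of an incidence structure: the least length of a
chain from `u` to `v`, or `∞` if there is none. -/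
noncomputable def dist (S : IncStruct P B) (u v : P ⊕ B) : ℕ∞ :=
  sInf {n : ℕ∞ | ∃ (k : ℕ) (c : List (P ⊕ B)), n = (k : ℕ∞) ∧ S.IsNChain k u v c}

/-- A linear space: two distinct points lie on a unique common line, every line has
at least two points, and some point-line pair is non-incident. -/
def IsLinearSpace (S : IncStruct P B) : Prop :=
  (∀ p q : P, p ≠ q → ∃! b : B, S.inc p b ∧ S.inc q b) ∧
  (∀ b : B, ∃ p q : P, p ≠ q ∧ S.inc p b ∧ S.inc q b) ∧
  (∃ (p : P) (b : B), ¬ S.inc p b)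

/-- A generalized quadrangle: all distances are at most `4`, and whenever
`d(u,v) = k < 4` there is a unique `k`-chain from `u` to `v`. -/
def IsGQ (S : IncStruct P B) : Prop :=
  (∀ u v : P ⊕ B, S.dist u v ≤ 4) ∧
  ∀ (u v : P ⊕ B) (k : ℕ), k < 4 → S.dist u v = (k : ℕ∞) →
    ∃! c : List (P ⊕ B), S.IsNChain k u v c

end IncStruct

section Construction

variable {P B G : Type*} [Group G]

/-- Incidence of Construction 𝔐: points are `P ⊕ B × Λ` (the `x_p` and `y_{b,λ}`),
lines are `P × Λ` (the `z_{p,μ}`); `x_p I' z_{p,λ}` always, and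
`y_{b,λ} I' z_{p,μ}` iff `b I p` and `μ = φ(bp) • λ`. -/
def Minc (S : IncStruct P B) (φ : B → P → G) (Λ : Type*) [MulAction G Λ] :
    P ⊕ B × Λ → P × Λ → Prop
  | Sum.inl q, (p, _) => q = p
  | Sum.inr (b, l), (p, m) => S.inc p b ∧ m = φ b p • l

/-- The incidence structure 𝔐(Γ,φ) of Construction 𝔐. -/
def MStruct (S : IncStruct P B) (φ : B → P → G) (Λ : Type*) [MulAction G Λ] :
    IncStruct (P ⊕ B × Λ) (P × Λ) := ⟨Minc S φ Λ⟩

/-- The gain `ρ_{b,p}(q) = φ(b'p) φ(b'q)⁻¹ φ(bq)` of the walk `(b, q, b', p)`,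
where `b'` is the (unique, in a linear space) line through `p` and `q`. -/
noncomputable def rho (S : IncStruct P B) (φ : B → P → G) (b : B) (p q : P) : G :=
  if h : ∃ b' : B, S.inc p b' ∧ S.inc q b' then
    φ h.choose p * (φ h.choose q)⁻¹ * φ b q
  else 1

end Construction

/-!
The lines through `x_p` are the `z_{p,λ}`, one for each `λ ∈ Λ`, and the lines through
`y_{b,λ}` correspond to the points of `b`. In a generalized quadrangle two non-collinear points
have equinumerous pencils (each line through one meets exactly one line through the other), and
`x_p`, `y_{b,λ}` are non-collinear as soon as `p` is off `b`. As a linear space has a point off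
every line, every line of `(P,B,I)` has `k = |Λ|` points, so every point `p` is on
`r = (v-1)/(k-1)` lines; and `z_{p,μ}` carries `x_p` and one point `y_{b,λ}` for each line `b`
through `p`.
-/

namespace IncStruct

variable {X Y : Type*} (S : IncStruct X Y)

def Collinear (u w : X) : Prop := ∃ z, S.inc u z ∧ S.inc w z

def Concurrent (z z' : Y) : Prop := ∃ x, S.inc x z ∧ S.inc x z'

variable {S}

lemma Collinear.symm {u w : X} (h : S.Collinear u w) : S.Collinear w u :=
  let ⟨z, hu, hw⟩ := h; ⟨z, hw, hu⟩

lemma Concurrent.symm {z z' : Y} (h : S.Concurrent z z') : S.Concurrent z' z :=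
  let ⟨x, hz, hz'⟩ := h; ⟨x, hz', hz⟩

lemma isLeft_eq_not_of_adj {a b : X ⊕ Y} (h : S.adj a b) : a.isLeft = !b.isLeft := by
  cases a <;> cases b <;> simp_all [adj]

lemma exists_eq_inr_of_adj_inl {p : X} {a : X ⊕ Y} (h : S.adj (Sum.inl p) a) :
    ∃ z, a = Sum.inr z ∧ S.inc p z := by
  cases a with
  | inl q => exact h.elim
  | inr z => exact ⟨z, rfl, h⟩

lemma exists_eq_inl_of_adj_inr {z : Y} {a : X ⊕ Y} (h : S.adj (Sum.inr z) a) :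
    ∃ p, a = Sum.inl p ∧ S.inc p z := by
  cases a with
  | inl q => exact ⟨q, rfl, h⟩
  | inr w => exact h.elim

lemma IsNChain.isLeft_eq_iff_even {k : ℕ} {u v : X ⊕ Y} {c : List (X ⊕ Y)}
    (h : S.IsNChain k u v c) : u.isLeft = v.isLeft ↔ Even k := by
  induction c generalizing k u with
  | nil => simp [IsNChain] at h
  | cons a t ih =>
    obtain ⟨hl, hh, hg, hc⟩ := h
    obtain rfl : a = u := by simpa using hh
    cases t with
    | nil =>
      obtain rfl : a = v := by simpa using hg
      obtain rfl : k = 0 := by simpa using hl.symm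
      simp
    | cons b t =>
      obtain ⟨hub, htc⟩ := List.isChain_cons_cons.mp hc
      have htail : S.IsNChain t.length b v (b :: t) :=
        ⟨by simp, by simp, by simpa [List.getLast?_cons_cons] using hg, htc⟩
      obtain rfl : k = t.length + 1 := by simp at hl; omega
      rw [Nat.even_add_one, ← ih htail, isLeft_eq_not_of_adj hub]
      cases b.isLeft <;> cases v.isLeft <;> simp

lemma IsNChain.adj_of_one {u v : X ⊕ Y} {c : List (X ⊕ Y)} (h : S.IsNChain 1 u v c) :
    S.adj u v := by
  obtain ⟨hl, hh, hg, hc⟩ := h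
  obtain ⟨a, b, rfl⟩ := List.length_eq_two.mp hl
  obtain rfl : a = u := by simpa using hh
  obtain rfl : b = v := by simpa using hg
  exact (List.isChain_cons_cons.mp hc).1

lemma isNChain_three_iff {u v : X ⊕ Y} {c : List (X ⊕ Y)} :
    S.IsNChain 3 u v c ↔ ∃ a b, c = [u, a, b, v] ∧ S.adj u a ∧ S.adj a b ∧ S.adj b v := by
  constructor
  · rintro ⟨hl, hh, hg, hc⟩
    obtain ⟨a', a, b, b', rfl⟩ := List.length_eq_four.mp hl
    obtain rfl : a' = u := by simpa using hh
    obtain rfl : b' = v := by simpa using hg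
    obtain ⟨hua, hc⟩ := List.isChain_cons_cons.mp hc
    obtain ⟨hab, hc⟩ := List.isChain_cons_cons.mp hc
    exact ⟨a, b, rfl, hua, hab, (List.isChain_cons_cons.mp hc).1⟩
  · rintro ⟨a, b, rfl, hua, hab, hbv⟩
    exact ⟨rfl, rfl, rfl, List.isChain_cons_cons.mpr ⟨hua, List.isChain_cons_cons.mpr ⟨hab, List.isChain_pair.mpr hbv⟩⟩⟩

lemma exists_isNChain_of_dist_ne_top {u v : X ⊕ Y} (h : S.dist u v ≠ ⊤) :
    ∃ (k : ℕ) (c : List (X ⊕ Y)), S.dist u v = k ∧ S.IsNChain k u v c := by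
  have hne : {n : ℕ∞ | ∃ (k : ℕ) (c : List (X ⊕ Y)), n = k ∧ S.IsNChain k u v c}.Nonempty :=
    Set.nonempty_iff_ne_empty.mpr fun he => h (by rw [dist, he, sInf_empty])
  obtain ⟨k, c, hk, hc⟩ := csInf_mem hne
  exact ⟨k, c, hk, hc⟩

lemma IsGQ.dist_eq_three_of_not_inc (hGQ : S.IsGQ) {p : X} {z : Y} (h : ¬ S.inc p z) :
    S.dist (Sum.inl p) (Sum.inr z) = 3 := by
  have h4 := hGQ.1 (Sum.inl p) (Sum.inr z)
  obtain ⟨k, c, hd, hc⟩ := exists_isNChain_of_dist_ne_top (ne_top_of_le_ne_top (by simp) h4)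
  have hk4 : k ≤ 4 := by exact_mod_cast hd ▸ h4
  have hodd : ¬ Even k := by simpa using hc.isLeft_eq_iff_even
  have hk1 : k ≠ 1 := by
    rintro rfl
    exact h hc.adj_of_one
  rw [hd, show k = 3 by grind]
  rfl

lemma IsGQ.existsUnique_inc_concurrent (hGQ : S.IsGQ) {w : X} {z : Y} (hwz : ¬ S.inc w z) :
    ∃! z', S.inc w z' ∧ S.Concurrent z' z := by
  obtain ⟨c, hc, huniq⟩ :=
    hGQ.2 (Sum.inl w) (Sum.inr z) 3 (by norm_num) (hGQ.dist_eq_three_of_not_inc hwz)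
  obtain ⟨e₁, e₂, rfl, h₁, h₂, h₃⟩ := isNChain_three_iff.mp hc
  obtain ⟨z₁, rfl, hwz₁⟩ := exists_eq_inr_of_adj_inl h₁
  obtain ⟨x₁, rfl, hx₁z₁⟩ := exists_eq_inl_of_adj_inr h₂
  refine ⟨z₁, ⟨hwz₁, x₁, hx₁z₁, h₃⟩, ?_⟩
  rintro z' ⟨hwz', x, hxz', hxz⟩
  have heq := huniq _ (isNChain_three_iff.mpr ⟨Sum.inr z', Sum.inl x, rfl, hwz', hxz', hxz⟩)
  simp only [List.cons.injEq, Sum.inr.injEq] at heq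
  exact heq.2.1

noncomputable def IsGQ.pencilMap (hGQ : S.IsGQ) {u w : X} (h : ¬ S.Collinear u w)
    (z : {z : Y // S.inc u z}) : {z' : Y // S.inc w z'} :=
  let hz := hGQ.existsUnique_inc_concurrent fun hw => h ⟨z, z.2, hw⟩
  ⟨hz.exists.choose, hz.exists.choose_spec.1⟩

lemma IsGQ.concurrent_pencilMap (hGQ : S.IsGQ) {u w : X} (h : ¬ S.Collinear u w)
    (z : {z : Y // S.inc u z}) : S.Concurrent (hGQ.pencilMap h z) z :=
  (hGQ.existsUnique_inc_concurrent fun hw => h ⟨z, z.2, hw⟩).exists.choose_spec.2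

lemma IsGQ.pencilMap_pencilMap (hGQ : S.IsGQ) {u w : X} (h : ¬ S.Collinear u w)
    (z : {z : Y // S.inc u z}) : hGQ.pencilMap (fun h' => h h'.symm) (hGQ.pencilMap h z) = z := by
  set z' := hGQ.pencilMap h z
  have hu : ¬ S.inc u z' := fun hu => h ⟨z', hu, z'.2⟩
  exact Subtype.ext <| (hGQ.existsUnique_inc_concurrent hu).unique
    ⟨(hGQ.pencilMap _ z').2, hGQ.concurrent_pencilMap _ z'⟩
    ⟨z.2, (hGQ.concurrent_pencilMap h z).symm⟩

noncomputable def IsGQ.pencilEquiv (hGQ : S.IsGQ) {u w : X} (h : ¬ S.Collinear u w) :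
    {z : Y // S.inc u z} ≃ {z : Y // S.inc w z} where
  toFun := hGQ.pencilMap h
  invFun := hGQ.pencilMap fun h' => h h'.symm
  left_inv := hGQ.pencilMap_pencilMap h
  right_inv := hGQ.pencilMap_pencilMap _

end IncStruct

namespace IncStruct.IsLinearSpace

variable {P B : Type*} {S : IncStruct P B}

lemma exists_not_inc (hLS : S.IsLinearSpace) (b : B) : ∃ p, ¬ S.inc p b := by
  obtain ⟨hline, hpair, p₀, b₀, hp₀⟩ := hLS
  obtain ⟨q, r, hqr, hq, hr⟩ := hpair b₀
  by_contra! hall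
  rw [← (hline q r hqr).unique ⟨hall q, hall r⟩ ⟨hq, hr⟩] at hp₀
  exact hp₀ (hall p₀)

lemma finite_lines [Finite P] (hLS : S.IsLinearSpace) : Finite B := by
  choose p q hpq hp hq using hLS.2.1
  refine Finite.of_injective (fun b => (p b, q b)) fun b b' hbb => ?_
  simp only [Prod.mk.injEq] at hbb
  exact (hLS.1 _ _ (hpq b)).unique ⟨hp b, hq b⟩ ⟨hbb.1 ▸ hp b', hbb.2 ▸ hq b'⟩

lemma two_le_card_inc [Finite P] (hLS : S.IsLinearSpace) (b : B) :
    2 ≤ Nat.card {q // S.inc q b} := by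
  obtain ⟨p, q, hpq, hp, hq⟩ := hLS.2.1 b
  have : Nontrivial {q // S.inc q b} :=
    ⟨⟨p, hp⟩, ⟨q, hq⟩, fun h => hpq (congrArg Subtype.val h)⟩
  exact Finite.one_lt_card

lemma three_le_card [Finite P] (hLS : S.IsLinearSpace) : 3 ≤ Nat.card P := by
  obtain ⟨-, hpair, p, b, hpb⟩ := hLS
  obtain ⟨q, r, hqr, hq, hr⟩ := hpair b
  have hpq : p ≠ q := by rintro rfl; exact hpb hq
  have hpr : p ≠ r := by rintro rfl; exact hpb hr
  have := Fintype.ofFinite P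
  rw [Nat.card_eq_fintype_card, ← Finset.card_eq_three.mpr ⟨p, q, r, hpq, hpr, hqr, rfl⟩]
  exact Finset.card_le_univ _

/-- Every point other than `p` lies on exactly one line through `p`. -/
lemma card_sub_one_eq_mul [Finite P] (hLS : S.IsLinearSpace) {k : ℕ}
    (hk : ∀ b, Nat.card {q // S.inc q b} = k) (p : P) :
    Nat.card P - 1 = Nat.card {b // S.inc p b} * (k - 1) := by
  have := Fintype.ofFinite P
  have := hLS.finite_lines
  have := Fintype.ofFinite B
  set pencil : Finset B := {b | S.inc p b}
  set others : B → Finset P := fun b => ({q | S.inc q b} : Finset P).erase p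
  have hcover : pencil.biUnion others = Finset.univ.erase p := by
    ext q
    simp only [pencil, others, Finset.mem_biUnion, Finset.mem_erase, Finset.mem_filter,
      Finset.mem_univ, true_and, and_true]
    refine ⟨fun ⟨_, _, hq, _⟩ => hq, fun hq => ?_⟩
    obtain ⟨b, ⟨hpb, hqb⟩, -⟩ := hLS.1 p q (Ne.symm hq)
    exact ⟨b, hpb, hq, hqb⟩
  have hdisj : ∀ b ∈ pencil, ∀ b' ∈ pencil, b ≠ b' → Disjoint (others b) (others b') := by
    intro b hb b' hb' hne
    refine Finset.disjoint_left.mpr fun q hq hq' => hne ?_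
    simp only [pencil, others, Finset.mem_erase, Finset.mem_filter, Finset.mem_univ,
      true_and] at hq hq' hb hb'
    exact (hLS.1 p q (Ne.symm hq.1)).unique ⟨hb, hq.2⟩ ⟨hb', hq'.2⟩
  have hsize : ∀ b ∈ pencil, (others b).card = k - 1 := by
    intro b hb
    rw [Finset.card_erase_of_mem (by simpa [pencil] using hb), ← Fintype.card_subtype,
      ← Nat.card_eq_fintype_card, hk]
  rw [Nat.card_eq_fintype_card, ← Finset.card_univ, ← Finset.card_erase_of_mem (Finset.mem_univ p),
    ← hcover, Finset.card_biUnion hdisj, Finset.sum_const_nat hsize, Nat.card_eq_fintype_card,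
    Fintype.card_subtype]

end IncStruct.IsLinearSpace

namespace MStruct

variable {P B G : Type*} [Group G] (S : IncStruct P B) (φ : B → P → G) (Λ : Type*)
  [MulAction G Λ]

def pencilInlEquiv (p : P) : {z : P × Λ // (MStruct S φ Λ).inc (Sum.inl p) z} ≃ Λ where
  toFun z := z.1.2
  invFun l := ⟨(p, l), rfl⟩
  left_inv := by rintro ⟨⟨q, l⟩, rfl : p = q⟩; rfl
  right_inv _ := rfl

def pencilInrEquiv (b : B) (l : Λ) :
    {z : P × Λ // (MStruct S φ Λ).inc (Sum.inr (b, l)) z} ≃ {q // S.inc q b} where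
  toFun z := ⟨z.1.1, z.2.1⟩
  invFun q := ⟨(q, φ b q • l), q.2, rfl⟩
  left_inv := by rintro ⟨⟨q, m⟩, hq, rfl⟩; rfl
  right_inv _ := rfl

def lineEquiv (p : P) (m : Λ) :
    {u : P ⊕ B × Λ // (MStruct S φ Λ).inc u (p, m)} ≃ Option {b // S.inc p b} where
  toFun
    | ⟨Sum.inl _, _⟩ => none
    | ⟨Sum.inr (b, _), h⟩ => some ⟨b, h.1⟩
  invFun
    | none => ⟨Sum.inl p, rfl⟩
    | some b => ⟨Sum.inr (b, (φ b p)⁻¹ • m), b.2, (smul_inv_smul _ _).symm⟩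
  left_inv := by
    rintro ⟨_ | ⟨b, l⟩, h⟩
    · obtain rfl : _ = p := h
      rfl
    · obtain ⟨-, rfl⟩ := h
      simp
  right_inv := by rintro (_ | _) <;> rfl

lemma not_collinear_inl_inr {p : P} {b : B} (h : ¬ S.inc p b) (l : Λ) :
    ¬ (MStruct S φ Λ).Collinear (Sum.inl p) (Sum.inr (b, l)) := by
  rintro ⟨⟨q, m⟩, rfl : p = q, hpb, -⟩
  exact h hpb

variable {S φ Λ}

lemma nonempty_equiv_inc_of_isGQ [Nonempty Λ] (hLS : S.IsLinearSpace)
    (hGQ : (MStruct S φ Λ).IsGQ) (b : B) : Nonempty (Λ ≃ {q // S.inc q b}) := by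
  obtain ⟨p, hpb⟩ := hLS.exists_not_inc b
  obtain ⟨l⟩ := ‹Nonempty Λ›
  exact ⟨(pencilInlEquiv S φ Λ p).symm.trans <|
    (hGQ.pencilEquiv (not_collinear_inl_inr S φ Λ hpb l)).trans (pencilInrEquiv S φ Λ b l)⟩

end MStruct

/-- if `P` is finite and 𝔐(Γ,φ) is a generalized quadrangle, then `Λ`
is finite, `v = |P| ≥ 3`, `k = |Λ| ≥ 2`, every line of 𝔐(Γ,φ) has exactly
`1 + (v-1)/(k-1)` points, and every point of 𝔐(Γ,φ) lies on exactly `k` lines. -/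
theorem finite_parameters {P B G Λ : Type*} [Group G] [MulAction G Λ] [Nonempty Λ]
    [Finite P] (S : IncStruct P B) (φ : B → P → G) (hLS : S.IsLinearSpace)
    (hGQ : (MStruct S φ Λ).IsGQ) :
    Finite Λ ∧ 3 ≤ Nat.card P ∧ 2 ≤ Nat.card Λ ∧
    (∀ z : P × Λ,
      Nat.card {u : P ⊕ B × Λ // (MStruct S φ Λ).inc u z} =
        1 + (Nat.card P - 1) / (Nat.card Λ - 1)) ∧
    ∀ u : P ⊕ B × Λ,
      Nat.card {z : P × Λ // (MStruct S φ Λ).inc u z} = Nat.card Λ := by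
  have := hLS.finite_lines
  obtain ⟨-, b₀, -⟩ := hLS.2.2
  have hequiv := MStruct.nonempty_equiv_inc_of_isGQ hLS hGQ
  have hk b : Nat.card {q // S.inc q b} = Nat.card Λ := (Nat.card_congr (hequiv b).some).symm
  have hk₂ : 2 ≤ Nat.card Λ := hk b₀ ▸ hLS.two_le_card_inc b₀
  have hr p : Nat.card {b // S.inc p b} = (Nat.card P - 1) / (Nat.card Λ - 1) := by
    rw [hLS.card_sub_one_eq_mul hk p, Nat.mul_div_cancel _ (by omega)]
  refine ⟨.of_equiv _ (hequiv b₀).some.symm, hLS.three_le_card, hk₂, fun ⟨p, m⟩ => ?_, ?_⟩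
  · rw [Nat.card_congr (MStruct.lineEquiv S φ Λ p m), Finite.card_option, hr p, add_comm]
  · rintro (p | ⟨b, l⟩)
    · exact Nat.card_congr (MStruct.pencilInlEquiv S φ Λ p)
    · rw [Nat.card_congr (MStruct.pencilInrEquiv S φ Λ b l), hk b]
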